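/- arXiv:math/0008070 — 3 statements merged into one kernel-verified Lean document; each statement's English description precedes it below -/
import Mathlib

section
/- Let X and K be topological spaces and let d : K → X and s : X → K be any continuous maps. Then the mapping telescope of d ∘ s : X → X is homotopy equivalent to the mapping telescope of s ∘ d : K → K. -/
/-!
A map `f : K → L` with `f ∘ α = β ∘ f` induces a map of telescopes `(x, i, t) ↦ (f x, i + c, t)`
for any index shift `c`. Take `s` with shift `0` and `d` with shift `1`: both composites are the
shift `(x, i, t) ↦ (γ x, i + 1, t)` of a telescope of `γ = d ∘ s` or `γ = s ∘ d`, and this shift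
is homotopic to the identity by sliding every point forward along the telescope by time `u ∈ [0,1]`.
-/

/-- The relation generating the mapping telescope of `α : K → K`:
`(x, i, 1) ∼ (α x, i + 1, 0)`. -/
def TelescopeRel {K : Type*} (α : K → K) :
    K × ℕ × unitInterval → K × ℕ × unitInterval → Prop :=
  fun p q => p.2.2 = 1 ∧ q = (α p.1, p.2.1 + 1, 0)

/-- The mapping telescope of `α : K → K`: the quotient of `K × ℕ × [0,1]` by the
identifications `(x, i, 1) ∼ (α x, i + 1, 0)`. -/
def MappingTelescope {K : Type*} (α : K → K) : Type _ :=
  Quot (TelescopeRel α)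

/-- The mapping telescope carries the quotient topology. -/
instance {K : Type*} [TopologicalSpace K] (α : K → K) :
    TopologicalSpace (MappingTelescope α) :=
  inferInstanceAs (TopologicalSpace (Quot (TelescopeRel α)))

namespace MappingTelescope

open Function Set unitInterval Topology

variable {K L M : Type*}

def mk (α : K → K) : K × ℕ × I → MappingTelescope α :=
  Quot.mk _

theorem mk_one (α : K → K) (x : K) (i : ℕ) : mk α (x, i, 1) = mk α (α x, i + 1, 0) :=
  Quot.sound ⟨rfl, rfl⟩

@[elab_as_elim]
theorem ind {α : K → K} {P : MappingTelescope α → Prop} (h : ∀ p, P (mk α p)) :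
    ∀ z, P z :=
  Quot.ind h

noncomputable def slide (α : K → K) (u : I) (p : K × ℕ × I) : MappingTelescope α :=
  if (p.2.2 : ℝ) + u ≤ 1 then mk α (p.1, p.2.1, projIcc 0 1 zero_le_one (p.2.2 + u))
  else mk α (α p.1, p.2.1 + 1, projIcc 0 1 zero_le_one (p.2.2 + u - 1))

theorem slide_of_add_le_one (α : K → K) {u t : I} (h : (t : ℝ) + u ≤ 1) (x : K) (i : ℕ) :
    slide α u (x, i, t) = mk α (x, i, projIcc 0 1 zero_le_one (t + u)) :=
  if_pos h

theorem slide_of_one_lt_add (α : K → K) {u t : I} (h : 1 < (t : ℝ) + u) (x : K) (i : ℕ) :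
    slide α u (x, i, t) = mk α (α x, i + 1, projIcc 0 1 zero_le_one (t + u - 1)) :=
  if_neg h.not_ge

theorem slide_eq_of_rel (α : K → K) (u : I) {p q : K × ℕ × I} (h : TelescopeRel α p q) :
    slide α u p = slide α u q := by
  obtain ⟨x, i, t⟩ := p
  obtain ⟨rfl, rfl⟩ := h
  have hq : slide α u (α x, i + 1, 0) = mk α (α x, i + 1, u) := by
    rw [slide_of_add_le_one α (by simpa using u.2.2)]
    simp
  obtain rfl | hu := eq_or_ne u 0
  · rw [slide_of_add_le_one α (by simp), hq]
    simpa using mk_one α x i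
  · rw [slide_of_one_lt_add α (by simpa using unitInterval.pos_iff_ne_zero.mpr hu), hq]
    simp

variable [TopologicalSpace K] [TopologicalSpace L] [TopologicalSpace M]

theorem isQuotientMap_mk (α : K → K) : IsQuotientMap (mk α) :=
  isQuotientMap_quot_mk

def map {α : K → K} {β : L → L} (f : C(K, L)) (c : ℕ) (hf : Semiconj f α β) :
    C(MappingTelescope α, MappingTelescope β) where
  toFun := Quot.map (fun p => (f p.1, p.2.1 + c, p.2.2)) <| by
    rintro ⟨x, i, t⟩ _ ⟨ht, rfl⟩
    exact ⟨ht, by simp [hf x, Nat.add_right_comm]⟩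
  continuous_toFun := (isQuotientMap_mk α).continuous_iff.mpr <|
    continuous_quot_mk.comp (by fun_prop)

@[simp]
theorem map_mk {α : K → K} {β : L → L} (f : C(K, L)) (c : ℕ) (hf : Semiconj f α β)
    (p : K × ℕ × I) : map f c hf (mk α p) = mk β (f p.1, p.2.1 + c, p.2.2) :=
  rfl

theorem map_comp_map {α : K → K} {β : L → L} {γ : M → M} (g : C(L, M)) (f : C(K, L))
    (c c' : ℕ) (hg : Semiconj g β γ) (hf : Semiconj f α β) :
    (map g c' hg).comp (map f c hf) = map (g.comp f) (c + c') (hg.comp_left hf) := by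
  ext z
  induction z using ind with
  | h p => simp [add_assoc]

def shift (α : C(K, K)) : C(MappingTelescope α, MappingTelescope α) :=
  map α 1 (Function.Commute.refl ⇑α)

theorem continuous_slide {α : K → K} (hα : Continuous α) :
    Continuous fun w : I × (K × ℕ × I) => slide α w.1 w.2 := by
  refine Continuous.if_le (continuous_quot_mk.comp (by fun_prop))
    (continuous_quot_mk.comp (by fun_prop)) (by fun_prop) continuous_const ?_
  rintro ⟨u, x, i, t⟩ (h : (t : ℝ) + u = 1)
  simpa [h] using mk_one α x i

noncomputable def slideHomotopy (α : C(K, K)) :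
    ContinuousMap.Homotopy (ContinuousMap.id (MappingTelescope α)) (shift α) where
  toFun w := Quot.lift (slide α w.1) (fun _ _ => slide_eq_of_rel α w.1) w.2
  continuous_toFun := (isQuotientMap_mk α).continuous_lift_prod_right (continuous_slide α.2)
  map_zero_left := ind fun ⟨x, i, t⟩ => by
    change slide α 0 (x, i, t) = mk α (x, i, t)
    rw [slide_of_add_le_one α (by simpa using t.2.2)]
    simp [projIcc_of_mem _ t.2]
  map_one_left := ind fun ⟨x, i, t⟩ => by
    change slide α 1 (x, i, t) = mk α (α x, i + 1, t)
    obtain rfl | ht := eq_or_ne t 0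
    · rw [slide_of_add_le_one α (by simp)]
      simpa using mk_one α x i
    · rw [slide_of_one_lt_add α (by simpa using unitInterval.pos_iff_ne_zero.mpr ht)]
      simp [projIcc_of_mem _ t.2]

end MappingTelescope

open MappingTelescope in
/-- For any continuous maps `d : K → X` and `s : X → K`, the mapping telescope of
`d ∘ s : X → X` is homotopy equivalent to the mapping telescope of `s ∘ d : K → K`. -/
theorem mappingTelescope_comp_homotopyEquiv
    {X K : Type*} [TopologicalSpace X] [TopologicalSpace K]
    (d : C(K, X)) (s : C(X, K)) :
    Nonempty (ContinuousMap.HomotopyEquiv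
      (MappingTelescope (⇑d ∘ ⇑s)) (MappingTelescope (⇑s ∘ ⇑d))) := by
  let f := map (α := ⇑d ∘ ⇑s) (β := ⇑s ∘ ⇑d) s 0 fun _ => rfl
  let g := map (α := ⇑s ∘ ⇑d) (β := ⇑d ∘ ⇑s) d 1 fun _ => rfl
  have hgf : g.comp f = shift (d.comp s) := map_comp_map d s 0 1 _ _
  have hfg : f.comp g = shift (s.comp d) := map_comp_map s d 1 0 _ _
  exact ⟨⟨f, g, hgf ▸ ⟨(slideHomotopy _).symm⟩, hfg ▸ ⟨(slideHomotopy _).symm⟩⟩⟩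
end

section
/- Let X and K be topological spaces and let d : K → X and s : X → K be any continuous maps. Then the map from the mapping torus T(d ∘ s) of d ∘ s : X → X to the mapping torus T(s ∘ d) of s ∘ d : K → K induced by (x, t) ↦ (s(x), t) is well defined, continuous, and a homotopy equivalence. -/
/-- The relation generating the mapping torus of `α : Y → Y`: `(y, 0) ∼ (α y, 1)`. -/
def TorusRel {Y : Type*} (α : Y → Y) :
    Y × unitInterval → Y × unitInterval → Prop :=
  fun p q => p.2 = 0 ∧ q = (α p.1, 1)

/-- The mapping torus `T(α) = (Y × [0,1]) / ((y,0) ∼ (α y,1))` of `α : Y → Y`. -/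
def MappingTorus {Y : Type*} (α : Y → Y) : Type _ :=
  Quot (TorusRel α)

/-- The mapping torus carries the quotient topology. -/
instance {Y : Type*} [TopologicalSpace Y] (α : Y → Y) :
    TopologicalSpace (MappingTorus α) :=
  inferInstanceAs (TopologicalSpace (Quot (TorusRel α)))

/-!
On any mapping torus `T(α)` the map `[y, t] ↦ [α y, t]` is homotopic to the identity: let each
point flow backwards for time `τ ∈ [0, 1]`, so `[y, t]` moves to `[y, t - τ]` and, once it has
crossed `t = 0`, on to `[α y, t + 1 - τ]`, which is the same point of `T(α)` continued across the
gluing `[y, 0] = [α y, 1]`. The two composites of `T(d ∘ s) ⇄ T(s ∘ d)` are exactly these maps for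
`α = d ∘ s` and `α = s ∘ d`.
-/

open unitInterval

namespace MappingTorus

variable {Y Z : Type*}

def mk (α : Y → Y) (y : Y) (t : I) : MappingTorus α := Quot.mk _ (y, t)

theorem mk_zero (α : Y → Y) (y : Y) : mk α y 0 = mk α (α y) 1 := Quot.sound ⟨rfl, rfl⟩

noncomputable def flowBack (α : Y → Y) (τ : I) (p : Y × I) : MappingTorus α :=
  if p.2 ≤ τ then mk α (α p.1) (Set.projIcc 0 1 zero_le_one (p.2 + 1 - τ))
  else mk α p.1 (Set.projIcc 0 1 zero_le_one (p.2 - τ))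

theorem flowBack_zero (α : Y → Y) (y : Y) (t : I) : flowBack α 0 (y, t) = mk α y t := by
  rcases eq_or_ne t 0 with rfl | ht
  · simp [flowBack, mk_zero]
  · simp [flowBack, ht]

theorem flowBack_one (α : Y → Y) (y : Y) (t : I) : flowBack α 1 (y, t) = mk α (α y) t := by
  simp [flowBack, le_one']

theorem flowBack_mk_zero (α : Y → Y) (τ : I) (y : Y) :
    flowBack α τ (y, 0) = flowBack α τ (α y, 1) := by
  by_cases hτ : 1 ≤ τ
  · obtain rfl := le_antisymm le_one' hτ
    simp [flowBack_one, mk_zero]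
  · simp [flowBack, hτ]

variable [TopologicalSpace Y] [TopologicalSpace Z]

@[fun_prop]
theorem _root_.Continuous.mappingTorusMk {W : Type*} [TopologicalSpace W] {α : Y → Y}
    {f : W → Y} {g : W → I} (hf : Continuous f) (hg : Continuous g) :
    Continuous fun w => mk α (f w) (g w) :=
  continuous_quot_mk.comp (hf.prodMk hg)

theorem continuous_flowBack {α : Y → Y} (hα : Continuous α) :
    Continuous fun q : I × (Y × I) => flowBack α q.1 q.2 := by
  refine Continuous.if_le (by fun_prop) (by fun_prop) (by fun_prop) (by fun_prop) ?_
  rintro ⟨τ, y, t⟩ (rfl : t = τ)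
  simp only [add_sub_cancel_left, sub_self, Set.projIcc_right, Set.projIcc_left]
  exact (mk_zero α y).symm

@[ext]
theorem hom_ext {W : Type*} [TopologicalSpace W] {α : Y → Y} {F G : C(MappingTorus α, W)}
    (h : ∀ y t, F (mk α y t) = G (mk α y t)) : F = G :=
  ContinuousMap.ext <| Quot.ind fun p => h p.1 p.2

def map (f : C(Y, Z)) {α : Y → Y} {β : Z → Z} (h : ∀ y, f (α y) = β (f y)) :
    C(MappingTorus α, MappingTorus β) where
  toFun := Quot.lift (fun p => mk β (f p.1) p.2) <| by
    rintro ⟨y, _⟩ _ ⟨rfl, rfl⟩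
    simp only [mk_zero, h]
  continuous_toFun := isQuotientMap_quot_mk.continuous_iff.mpr <| by fun_prop

theorem map_comp_map (f : C(Y, Z)) (g : C(Z, Y)) {α : Y → Y} {β : Z → Z}
    (hf : ∀ y, f (α y) = β (f y)) (hg : ∀ z, g (β z) = α (g z)) :
    (map g hg).comp (map f hf) = map (g.comp f) (fun y => by simp [hf, hg]) :=
  hom_ext fun _ _ => rfl

noncomputable def flowBackHomotopy (α : C(Y, Y)) :
    ContinuousMap.Homotopy (ContinuousMap.id (MappingTorus α)) (map α fun _ => rfl) where
  toFun q := Quot.lift (flowBack α q.1)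
    (by rintro ⟨y, _⟩ _ ⟨rfl, rfl⟩; exact flowBack_mk_zero α q.1 y) q.2
  continuous_toFun :=
    isQuotientMap_quot_mk.continuous_lift_prod_right (continuous_flowBack α.continuous)
  map_zero_left := Quot.ind fun p => flowBack_zero α p.1 p.2
  map_one_left := Quot.ind fun p => flowBack_one α p.1 p.2

end MappingTorus

/-- For any continuous maps `d : K → X` and `s : X → K`, the map
`T(d ∘ s) → T(s ∘ d)` induced by `(x, t) ↦ (s x, t)` is well defined, continuous, and
a homotopy equivalence. -/
theorem mappingTorus_induced_map_homotopyEquiv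
    {X K : Type*} [TopologicalSpace X] [TopologicalSpace K]
    (d : C(K, X)) (s : C(X, K)) :
    ∃ F : C(MappingTorus (⇑d ∘ ⇑s), MappingTorus (⇑s ∘ ⇑d)),
      (∀ (x : X) (t : unitInterval),
        F (Quot.mk (TorusRel (⇑d ∘ ⇑s)) (x, t)) = Quot.mk (TorusRel (⇑s ∘ ⇑d)) (s x, t)) ∧
      ∃ G : C(MappingTorus (⇑s ∘ ⇑d), MappingTorus (⇑d ∘ ⇑s)),
        (G.comp F).Homotopic (ContinuousMap.id _) ∧
        (F.comp G).Homotopic (ContinuousMap.id _) := by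
  refine ⟨MappingTorus.map s fun _ => rfl, fun _ _ => rfl, MappingTorus.map d fun _ => rfl, ?_, ?_⟩
  · rw [MappingTorus.map_comp_map]
    exact ⟨(MappingTorus.flowBackHomotopy (d.comp s)).symm⟩
  · rw [MappingTorus.map_comp_map]
    exact ⟨(MappingTorus.flowBackHomotopy (s.comp d)).symm⟩
end

section
/- Let X be a compact subset of ℝ^N and suppose there exist an open set U ⊆ ℝ^N with X ⊆ U and a continuous retraction r : U → X (so r(x) = x for all x ∈ X). Then there exist a finite CW complex K and continuous maps d : K → X and s : X → K with d ∘ s equal to the identity of X; in particular X is finitely dominated. -/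
open Metric Set

/-- A CW-structure on a topological space `X`: a family of cells in each dimension `n`,
with characteristic maps defined on the closed unit ball of `ℝⁿ`, satisfying the usual
axioms of a CW complex (characteristic maps are homeomorphisms from the open ball onto
the open cells, the open cells are disjoint and cover `X`, closure-finiteness, and the
weak topology). -/
structure CWStructure (X : Type*) [TopologicalSpace X] where
  /-- The index type of the `n`-cells. -/
  cell (n : ℕ) : Type
  /-- The characteristic map of each `n`-cell. -/
  map (n : ℕ) (i : cell n) : PartialEquiv (EuclideanSpace ℝ (Fin n)) X
  source_eq (n : ℕ) (i : cell n) : (map n i).source = closedBall 0 1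
  continuousOn (n : ℕ) (i : cell n) : ContinuousOn (map n i) (closedBall 0 1)
  continuousOn_symm (n : ℕ) (i : cell n) : ContinuousOn (map n i).symm (map n i).target
  pairwiseDisjoint' :
    (Set.univ : Set (Σ n, cell n)).PairwiseDisjoint
      (fun ni ↦ ↑(map ni.1 ni.2) '' ball 0 1)
  mapsTo (n : ℕ) (i : cell n) : ∃ I : Π m, Finset (cell m),
    Set.MapsTo (map n i) (sphere 0 1)
      (⋃ (m < n) (j ∈ I m), ↑(map m j) '' closedBall 0 1)
  closed' (A : Set X) :
    (∀ n (i : cell n), IsClosed (A ∩ ↑(map n i) '' closedBall 0 1)) → IsClosed A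
  union' : ⋃ (n : ℕ) (i : cell n), ↑(map n i) '' closedBall 0 1 = Set.univ

/-- A CW-structure is finite if it has finitely many cells in total. -/
def CWStructure.IsFinite {X : Type*} [TopologicalSpace X] (c : CWStructure X) : Prop :=
  Finite (Σ n, c.cell n)

/-- A CW-structure is countable if it has countably many cells in total. -/
def CWStructure.IsCountable {X : Type*} [TopologicalSpace X] (c : CWStructure X) : Prop :=
  Countable (Σ n, c.cell n)

/-- A CW-structure has dimension at most `m` if it has no cells in dimensions `> m`. -/
def CWStructure.DimLE {X : Type*} [TopologicalSpace X] (c : CWStructure X) (m : ℕ) : Prop :=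
  ∀ n, m < n → IsEmpty (c.cell n)

/-- A topological space `X` is finitely dominated if there are a finite CW complex `K` and
continuous maps `d : K → X`, `s : X → K` such that `d ∘ s` is homotopic to the identity. -/
def FinitelyDominated (X : Type*) [TopologicalSpace X] : Prop :=
  ∃ (K : Type) (_ : TopologicalSpace K) (c : CWStructure K), c.IsFinite ∧
    ∃ (d : C(K, X)) (s : C(X, K)),
      (d.comp s).Homotopic (ContinuousMap.id X)

/-!
Choose a grid so fine that every grid cube meeting `X` lies in `U`. The union `P` of the finitely
many cubes meeting `X` satisfies `X ⊆ P ⊆ U`, so the inclusion `s : X → P` and the restriction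
`d = r|_P` satisfy `d ∘ s = id`, and it remains to give `P` a finite CW structure.

Its cells are the faces of the grid cubes, i.e. products of unit intervals and integer points. The
open faces partition `P` (the open face containing a point is read off from the floors of its
coordinates), and a point of a closed face outside the open face lies in an open face of lower
dimension. A characteristic map is the homeomorphism of the Euclidean ball onto the cube `[0,1]ⁿ`
obtained by gauge rescaling, followed by an affine embedding onto the face; being injective on the
compact closed ball, it has a continuous inverse on the closed face.
-/

theorem IsCompact.continuousOn_image_of_leftInvOn {α β : Type*} [TopologicalSpace α]
    [TopologicalSpace β] [T2Space β] {f : α → β} {s : Set α} (hs : IsCompact s)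
    (hf : ContinuousOn f s) {g : β → α} (hg : LeftInvOn g f s) : ContinuousOn g (f '' s) := by
  refine continuousOn_iff_isClosed.2 fun t ht => ⟨f '' (t ∩ s), ?_, ?_⟩
  · exact ((hs.inter_left ht).image_of_continuousOn (hf.mono inter_subset_right)).isClosed
  · rw [inter_eq_self_of_subset_left (image_mono inter_subset_right), hg.image_inter']

theorem exists_homeomorph_image_unitBall_eq_interior_closure {E V : Type*}
    [NormedAddCommGroup E] [NormedSpace ℝ E] [NormedAddCommGroup V] [NormedSpace ℝ V]
    (e : E ≃L[ℝ] V) {s : Set V} (hc : Convex ℝ s) (hne : (interior s).Nonempty)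
    (hb : Bornology.IsBounded s) :
    ∃ g : E ≃ₜ V, g '' ball 0 1 = interior s ∧ g '' closedBall 0 1 = closure s := by
  set ψ := e.toHomeomorph
  obtain ⟨h, hint, hcl, -⟩ := exists_homeomorph_image_interior_closure_frontier_eq_unitBall
    (s := ψ.symm '' s) (hc.linear_image e.symm.toLinearMap)
    (by rw [← ψ.symm.image_interior]; exact hne.image _)
    (e.symm.lipschitz.isBounded_image hb)
  refine ⟨h.symm.trans ψ, ?_, ?_⟩
  · rw [← hint, ← ψ.symm.image_interior, image_image, image_image]
    simp
  · rw [← hcl, ← ψ.symm.image_closure, image_image, image_image]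
    simp

theorem interior_Icc_eq_pi {ι : Type*} [Finite ι] (a b : ι → ℝ) :
    interior (Icc a b) = univ.pi fun i => Ioo (a i) (b i) := by
  rw [← pi_univ_Icc, interior_pi_set finite_univ]
  simp

namespace UnitGrid

/- `(j, true)` codes the cell `j + J` (the interval `[j, j + 1]` for `J = Icc 0 1`, `(j, j + 1)` for
`J = Ioo 0 1`) and `(j, false)` the point `j`; `faces p` lists the cells in the closure of `p`. -/
def cell (J : Set ℝ) (p : ℤ × Bool) : Set ℝ :=
  if p.2 then (fun u => (p.1 : ℝ) + u) '' J else {(p.1 : ℝ)}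

def faces (p : ℤ × Bool) : Finset (ℤ × Bool) :=
  if p.2 then {p, (p.1, false), (p.1 + 1, false)} else {p}

noncomputable def cellOf (t : ℝ) : ℤ × Bool := (⌊t⌋, decide ((⌊t⌋ : ℝ) < t))

theorem cell_Ioo_subset_cell_Icc (p : ℤ × Bool) : cell (Ioo 0 1) p ⊆ cell (Icc 0 1) p := by
  unfold cell
  split_ifs
  exacts [image_mono Ioo_subset_Icc_self, subset_rfl]

theorem mem_cell_Ioo_iff {t : ℝ} {p : ℤ × Bool} : t ∈ cell (Ioo 0 1) p ↔ cellOf t = p := by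
  obtain ⟨j, _ | _⟩ := p
  · simp only [cell, Bool.false_eq_true, if_false, mem_singleton_iff, cellOf, Prod.mk.injEq,
      decide_eq_false_iff_not, not_lt]
    constructor
    · rintro rfl
      simp
    · rintro ⟨rfl, h⟩
      exact le_antisymm h (Int.floor_le t)
  · simp only [cell, if_true, image_const_add_Ioo, add_zero, mem_Ioo, cellOf, Prod.mk.injEq,
      decide_eq_true_eq]
    constructor
    · rintro ⟨h₁, h₂⟩
      have hj : ⌊t⌋ = j := Int.floor_eq_iff.2 ⟨h₁.le, h₂⟩
      exact ⟨hj, hj ▸ h₁⟩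
    · rintro ⟨rfl, h⟩
      exact ⟨h, Int.lt_floor_add_one t⟩

theorem cell_Icc_eq_biUnion (p : ℤ × Bool) :
    cell (Icc 0 1) p = ⋃ q ∈ faces p, cell (Ioo 0 1) q := by
  obtain ⟨j, _ | _⟩ := p
  · simp [cell, faces]
  · simp only [cell, faces, if_true, image_const_add_Icc, image_const_add_Ioo, add_zero,
      Finset.mem_insert, Finset.mem_singleton, iUnion_iUnion_eq_or_left, iUnion_iUnion_eq_left,
      Bool.false_eq_true, if_false, Int.cast_add, Int.cast_one]
    rw [← Ioo_union_both (by linarith), insert_eq]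

theorem mem_cell_Icc_iff {t : ℝ} {p : ℤ × Bool} : t ∈ cell (Icc 0 1) p ↔ cellOf t ∈ faces p := by
  simp [cell_Icc_eq_biUnion, mem_cell_Ioo_iff]

theorem eq_or_proper_of_mem_faces {p q : ℤ × Bool} (hq : q ∈ faces p) :
    q = p ∨ q.2 = false ∧ p.2 = true := by
  obtain ⟨j, _ | _⟩ := p <;> simp only [faces] at hq <;> aesop

theorem cell_Icc_subset_of_mem_faces {p q : ℤ × Bool} (hq : q ∈ faces p) :
    cell (Icc 0 1) q ⊆ cell (Icc 0 1) p := by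
  intro t ht
  rw [mem_cell_Icc_iff] at ht ⊢
  rcases eq_or_proper_of_mem_faces hq with rfl | ⟨hq₂, -⟩
  · exact ht
  · simp only [faces, hq₂, Bool.false_eq_true, if_false, Finset.mem_singleton] at ht
    rwa [ht]

variable {N : ℕ}

def face (J : Set ℝ) (F : Fin N → ℤ × Bool) : Set (Fin N → ℝ) :=
  univ.pi fun k => cell J (F k)

noncomputable def faceOf (y : Fin N → ℝ) : Fin N → ℤ × Bool := fun k => cellOf (y k)

theorem mem_face_Ioo_iff {y : Fin N → ℝ} {F : Fin N → ℤ × Bool} :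
    y ∈ face (Ioo 0 1) F ↔ faceOf y = F := by
  simp [face, mem_cell_Ioo_iff, funext_iff, faceOf]

theorem mem_face_Icc_iff {y : Fin N → ℝ} {F : Fin N → ℤ × Bool} :
    y ∈ face (Icc 0 1) F ↔ ∀ k, faceOf y k ∈ faces (F k) := by
  simp [face, mem_cell_Icc_iff, faceOf]

theorem face_Ioo_subset_face_Icc (F : Fin N → ℤ × Bool) : face (Ioo 0 1) F ⊆ face (Icc 0 1) F :=
  pi_mono fun k _ => cell_Ioo_subset_cell_Icc (F k)

def dim (F : Fin N → ℤ × Bool) : ℕ := (Finset.univ.filter fun k => (F k).2).card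

theorem dim_lt_of_mem_faces {F G : Fin N → ℤ × Bool} (hG : ∀ k, G k ∈ faces (F k))
    (hne : G ≠ F) : dim G < dim F := by
  obtain ⟨k, hk⟩ := Function.ne_iff.1 hne
  refine Finset.card_lt_card ((Finset.ssubset_iff_of_subset fun l hl => ?_).2 ⟨k, ?_⟩)
  · simp only [Finset.mem_filter, Finset.mem_univ, true_and] at hl ⊢
    rcases eq_or_proper_of_mem_faces (hG l) with h | h
    · rwa [← h]
    · simp_all
  · have := (eq_or_proper_of_mem_faces (hG k)).resolve_left hk
    simp_all

def cube (c : Fin N → ℤ) : Set (Fin N → ℝ) := face (Icc 0 1) fun k => (c k, true)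

theorem cube_eq_Icc (c : Fin N → ℤ) : cube c = Icc (fun k => (c k : ℝ)) (fun k => c k + 1) := by
  simp [cube, face, cell, ← pi_univ_Icc, add_comm]

def IsFaceOf (F : Fin N → ℤ × Bool) (c : Fin N → ℤ) : Prop := ∀ k, F k ∈ faces (c k, true)

theorem face_Icc_subset_cube {F : Fin N → ℤ × Bool} {c : Fin N → ℤ} (h : IsFaceOf F c) :
    face (Icc 0 1) F ⊆ cube c :=
  pi_mono fun k _ => cell_Icc_subset_of_mem_faces (h k)

theorem isFaceOf_faceOf {y : Fin N → ℝ} {c : Fin N → ℤ} (hy : y ∈ cube c) :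
    IsFaceOf (faceOf y) c :=
  mem_face_Icc_iff.1 hy

theorem finite_setOf_isFaceOf (c : Fin N → ℤ) : {F | IsFaceOf F c}.Finite :=
  Set.Finite.pi' fun _ => (faces _).finite_toSet

variable {n : ℕ}

noncomputable def faceEmbedding (F : Fin N → ℤ × Bool) (hF : dim F = n) (t : Fin n → ℝ) :
    Fin N → ℝ :=
  fun k => (F k).1 + if hk : (F k).2 then t (Finset.equivFinOfCardEq hF ⟨k, by simpa⟩) else 0

theorem continuous_faceEmbedding (F : Fin N → ℤ × Bool) (hF : dim F = n) :
    Continuous (faceEmbedding F hF) := by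
  refine continuous_pi fun k => continuous_const.add ?_
  split_ifs <;> fun_prop

theorem faceEmbedding_injective (F : Fin N → ℤ × Bool) (hF : dim F = n) :
    Function.Injective (faceEmbedding F hF) := by
  intro t t' h
  funext i
  obtain ⟨⟨k, hk⟩, rfl⟩ := (Finset.equivFinOfCardEq hF).surjective i
  have hk' : (F k).2 = true := by simpa using hk
  simpa [faceEmbedding, hk'] using congrFun h k

theorem image_faceEmbedding_pi (F : Fin N → ℤ × Bool) (hF : dim F = n) (J : Set ℝ) :
    faceEmbedding F hF '' univ.pi (fun _ => J) = face J F := by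
  set e := Finset.equivFinOfCardEq hF
  ext y
  constructor
  · rintro ⟨t, ht, rfl⟩ k -
    by_cases hk : (F k).2
    · simpa [faceEmbedding, cell, hk] using ht _ trivial
    · simp [faceEmbedding, cell, hk]
  · intro hy
    refine ⟨fun i => y (e.symm i) - (F (e.symm i)).1, fun i _ => ?_, funext fun k => ?_⟩
    · have hk : (F (e.symm i)).2 = true := (Finset.mem_filter.1 (e.symm i).2).2
      obtain ⟨u, hu, hyu⟩ : y (e.symm i) ∈ (fun u => ((F (e.symm i)).1 : ℝ) + u) '' J := by
        simpa [cell, hk] using hy (e.symm i) trivial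
      simpa [← hyu] using hu
    · by_cases hk : (F k).2
      · simp [faceEmbedding, hk, e]
      · have hyk := hy k trivial
        simp only [cell, hk, Bool.false_eq_true, if_false, mem_singleton_iff] at hyk
        simp [faceEmbedding, hk, hyk]

theorem exists_homeomorph_ball_cube (n : ℕ) :
    ∃ g : EuclideanSpace ℝ (Fin n) ≃ₜ (Fin n → ℝ),
      g '' ball 0 1 = univ.pi (fun _ => Ioo 0 1) ∧
        g '' closedBall 0 1 = univ.pi (fun _ => Icc 0 1) := by
  have hne : (interior (Icc (0 : Fin n → ℝ) 1)).Nonempty :=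
    ⟨fun _ => 1 / 2, by rw [interior_Icc_eq_pi]; norm_num⟩
  obtain ⟨g, hball, hclosedBall⟩ := exists_homeomorph_image_unitBall_eq_interior_closure
    (EuclideanSpace.equiv (Fin n) ℝ) (convex_Icc 0 1) hne (isBounded_Icc 0 1)
  refine ⟨g, by rw [hball, interior_Icc_eq_pi]; rfl, ?_⟩
  rw [hclosedBall, closure_Icc, pi_univ_Icc]
  rfl

noncomputable def ballCubeHomeomorph (n : ℕ) : EuclideanSpace ℝ (Fin n) ≃ₜ (Fin n → ℝ) :=
  (exists_homeomorph_ball_cube n).choose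

noncomputable def faceChart (F : Fin N → ℤ × Bool) (hF : dim F = n) :
    EuclideanSpace ℝ (Fin n) → Fin N → ℝ :=
  faceEmbedding F hF ∘ ballCubeHomeomorph n

theorem continuous_faceChart (F : Fin N → ℤ × Bool) (hF : dim F = n) :
    Continuous (faceChart F hF) :=
  (continuous_faceEmbedding F hF).comp (ballCubeHomeomorph n).continuous

theorem faceChart_injective (F : Fin N → ℤ × Bool) (hF : dim F = n) :
    Function.Injective (faceChart F hF) :=
  (faceEmbedding_injective F hF).comp (ballCubeHomeomorph n).injective

theorem image_faceChart_ball (F : Fin N → ℤ × Bool) (hF : dim F = n) :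
    faceChart F hF '' ball 0 1 = face (Ioo 0 1) F := by
  rw [faceChart, image_comp, ballCubeHomeomorph, (exists_homeomorph_ball_cube n).choose_spec.1,
    image_faceEmbedding_pi]

theorem image_faceChart_closedBall (F : Fin N → ℤ × Bool) (hF : dim F = n) :
    faceChart F hF '' closedBall 0 1 = face (Icc 0 1) F := by
  rw [faceChart, image_comp, ballCubeHomeomorph, (exists_homeomorph_ball_cube n).choose_spec.2,
    image_faceEmbedding_pi]

variable (𝒞 : Finset (Fin N → ℤ))

def polyhedron : Set (Fin N → ℝ) := ⋃ c ∈ 𝒞, cube c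

def IsFace (F : Fin N → ℤ × Bool) : Prop := ∃ c ∈ 𝒞, IsFaceOf F c

theorem finite_setOf_isFace : {F | IsFace 𝒞 F}.Finite := by
  have : {F | IsFace 𝒞 F} = ⋃ c ∈ 𝒞, {F | IsFaceOf F c} := by
    ext
    simp [IsFace]
  rw [this]
  exact 𝒞.finite_toSet.biUnion fun c _ => finite_setOf_isFaceOf c

abbrev Cell (n : ℕ) : Type := {F : Fin N → ℤ × Bool // IsFace 𝒞 F ∧ dim F = n}

instance : Finite (Σ n, Cell 𝒞 n) := by
  have : Finite {F // IsFace 𝒞 F} := (finite_setOf_isFace 𝒞).to_subtype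
  refine Finite.of_injective (fun p => (⟨p.2.1, p.2.2.1⟩ : {F // IsFace 𝒞 F})) ?_
  rintro ⟨n, F, hF⟩ ⟨m, G, hG⟩ h
  obtain rfl : F = G := congrArg Subtype.val h
  obtain rfl : n = m := hF.2.symm.trans hG.2
  rfl

instance (n : ℕ) : Finite (Cell 𝒞 n) :=
  Finite.of_injective (Sigma.mk n) sigma_mk_injective

variable {𝒞}

theorem face_Icc_subset_polyhedron {F : Fin N → ℤ × Bool} (hF : IsFace 𝒞 F) :
    face (Icc 0 1) F ⊆ polyhedron 𝒞 := by
  obtain ⟨c, hc, hFc⟩ := hF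
  exact (face_Icc_subset_cube hFc).trans (subset_biUnion_of_mem (u := cube) hc)

theorem isFace_faceOf {y : Fin N → ℝ} (hy : y ∈ polyhedron 𝒞) : IsFace 𝒞 (faceOf y) := by
  obtain ⟨c, hc, hyc⟩ := mem_iUnion₂.1 hy
  exact ⟨c, hc, isFaceOf_faceOf hyc⟩

/- Off the closed ball the value is irrelevant; the `if` only keeps it inside the polyhedron. -/
open scoped Classical in
noncomputable def cellMap (i : Cell 𝒞 n) : EuclideanSpace ℝ (Fin n) → polyhedron 𝒞 := fun x =>
  ⟨faceChart i.1 i.2.2 (if x ∈ closedBall 0 1 then x else 0), face_Icc_subset_polyhedron i.2.1 <| by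
    rw [← image_faceChart_closedBall]
    refine mem_image_of_mem _ ?_
    split_ifs with hx
    exacts [hx, mem_closedBall_self zero_le_one]⟩

theorem val_cellMap (i : Cell 𝒞 n) {x : EuclideanSpace ℝ (Fin n)} (hx : x ∈ closedBall 0 1) :
    (cellMap i x : Fin N → ℝ) = faceChart i.1 i.2.2 x := by
  simp [cellMap, hx]

theorem continuousOn_cellMap (i : Cell 𝒞 n) : ContinuousOn (cellMap i) (closedBall 0 1) :=
  Topology.IsInducing.subtypeVal.continuousOn_iff.2 <|
    (continuous_faceChart i.1 i.2.2).continuousOn.congr fun _ hx => val_cellMap i hx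

theorem injOn_cellMap (i : Cell 𝒞 n) : InjOn (cellMap i) (closedBall 0 1) := fun x hx x' hx' h =>
  faceChart_injective i.1 i.2.2 <| by rw [← val_cellMap i hx, ← val_cellMap i hx', h]

theorem image_cellMap {S : Set (EuclideanSpace ℝ (Fin n))} (hS : S ⊆ closedBall 0 1)
    (i : Cell 𝒞 n) :
    cellMap i '' S = Subtype.val ⁻¹' (faceChart i.1 i.2.2 '' S) := by
  ext z
  constructor
  · rintro ⟨x, hx, rfl⟩
    exact ⟨x, hx, (val_cellMap i (hS hx)).symm⟩
  · rintro ⟨x, hx, hxz⟩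
    exact ⟨x, hx, Subtype.ext ((val_cellMap i (hS hx)).trans hxz)⟩

theorem image_cellMap_closedBall (i : Cell 𝒞 n) :
    cellMap i '' closedBall 0 1 = Subtype.val ⁻¹' face (Icc 0 1) i.1 := by
  rw [image_cellMap subset_rfl, image_faceChart_closedBall]

theorem image_cellMap_ball (i : Cell 𝒞 n) :
    cellMap i '' ball 0 1 = Subtype.val ⁻¹' face (Ioo 0 1) i.1 := by
  rw [image_cellMap ball_subset_closedBall, image_faceChart_ball]

theorem val_cellMap_notMem_face_Ioo (i : Cell 𝒞 n) {x : EuclideanSpace ℝ (Fin n)}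
    (hx : x ∈ sphere 0 1) : (cellMap i x : Fin N → ℝ) ∉ face (Ioo 0 1) i.1 := by
  rw [← image_faceChart_ball i.1 i.2.2, val_cellMap i (sphere_subset_closedBall hx)]
  rintro ⟨x', hx', h⟩
  obtain rfl := faceChart_injective i.1 i.2.2 h
  exact (mem_ball.1 hx').ne (mem_sphere.1 hx)

theorem dim_faceOf_cellMap_lt (i : Cell 𝒞 n) {x : EuclideanSpace ℝ (Fin n)}
    (hx : x ∈ sphere 0 1) : dim (faceOf (cellMap i x : Fin N → ℝ)) < n := by
  have hmem : cellMap i x ∈ cellMap i '' closedBall 0 1 :=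
    mem_image_of_mem _ (sphere_subset_closedBall hx)
  rw [image_cellMap_closedBall, mem_preimage, mem_face_Icc_iff] at hmem
  have hlt := dim_lt_of_mem_faces hmem
    fun h => val_cellMap_notMem_face_Ioo i hx (mem_face_Ioo_iff.2 h)
  rwa [i.2.2] at hlt

theorem mem_image_cellMap_faceOf (z : polyhedron 𝒞) :
    z ∈ cellMap (⟨faceOf z.1, isFace_faceOf z.2, rfl⟩ : Cell 𝒞 _) '' closedBall 0 1 := by
  rw [image_cellMap_closedBall]
  exact face_Ioo_subset_face_Icc _ (mem_face_Ioo_iff.2 rfl)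

theorem iUnion_image_cellMap_closedBall :
    ⋃ (n : ℕ) (i : Cell 𝒞 n), cellMap i '' closedBall 0 1 = univ :=
  eq_univ_of_forall fun z => mem_iUnion₂.2 ⟨_, _, mem_image_cellMap_faceOf z⟩

variable (𝒞)

noncomputable def cwStructure : CWStructure (polyhedron 𝒞) where
  cell := Cell 𝒞
  map n i := (injOn_cellMap i).toPartialEquiv
  source_eq n i := rfl
  continuousOn n i := continuousOn_cellMap i
  continuousOn_symm n i := (isCompact_closedBall 0 1).continuousOn_image_of_leftInvOn
    (continuousOn_cellMap i) (injOn_cellMap i).leftInvOn_invFunOn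
  pairwiseDisjoint' := by
    rintro ⟨n, F, hF⟩ - ⟨m, G, hG⟩ - hne
    refine disjoint_left.2 fun z hzF hzG => hne ?_
    change z ∈ cellMap _ '' ball 0 1 at hzF
    change z ∈ cellMap _ '' ball 0 1 at hzG
    rw [image_cellMap_ball, mem_preimage, mem_face_Ioo_iff] at hzF hzG
    obtain rfl : F = G := hzF.symm.trans hzG
    obtain rfl : n = m := hF.2.symm.trans hG.2
    rfl
  mapsTo n i := by
    have (m : ℕ) : Fintype (Cell 𝒞 m) := Fintype.ofFinite _
    refine ⟨fun m => Finset.univ, fun x hx => mem_iUnion₂.2 ⟨_, dim_faceOf_cellMap_lt i hx,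
      mem_iUnion₂.2 ⟨_, Finset.mem_univ _, mem_image_cellMap_faceOf (cellMap i x)⟩⟩⟩
  closed' A hA := by
    have hA_eq : A = ⋃ p : Σ n, Cell 𝒞 n, A ∩ cellMap p.2 '' closedBall 0 1 := by
      rw [← inter_iUnion, iUnion_sigma, iUnion_image_cellMap_closedBall, inter_univ]
    rw [hA_eq]
    exact isClosed_iUnion_of_finite fun p => hA p.1 p.2
  union' := iUnion_image_cellMap_closedBall

theorem cwStructure_isFinite : (cwStructure 𝒞).IsFinite :=
  inferInstanceAs (Finite (Σ n, Cell 𝒞 n))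

theorem mem_cube_floor (y : Fin N → ℝ) : y ∈ cube fun k => ⌊y k⌋ := by
  rw [cube_eq_Icc]
  exact ⟨fun k => Int.floor_le _, fun k => (Int.lt_floor_add_one _).le⟩

theorem finite_setOf_cube_inter_nonempty {Y : Set (Fin N → ℝ)} (hY : Bornology.IsBounded Y) :
    {c : Fin N → ℤ | (cube c ∩ Y).Nonempty}.Finite := by
  obtain ⟨R, hR⟩ := hY.subset_closedBall 0
  refine (Set.Finite.pi' fun _ => Set.finite_Icc (-⌈R⌉ - 1) ⌈R⌉).subset ?_
  rintro c ⟨y, hyc, hyY⟩ k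
  rw [cube_eq_Icc] at hyc
  have hyk : |y k| ≤ R := (norm_le_pi_norm y k).trans (mem_closedBall_zero_iff.1 (hR hyY))
  have := Int.le_ceil R
  constructor <;> rw [← Int.cast_le (R := ℝ)] <;> push_cast <;>
    linarith [abs_le.1 hyk, hyc.1 k, hyc.2 k]

theorem exists_polyhedron_near {Y : Set (Fin N → ℝ)} (hY : Bornology.IsBounded Y) :
    ∃ 𝒞 : Finset (Fin N → ℤ), Y ⊆ polyhedron 𝒞 ∧ ∀ z ∈ polyhedron 𝒞, ∃ y ∈ Y, dist z y ≤ 1 := by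
  set 𝒞 := (finite_setOf_cube_inter_nonempty hY).toFinset
  refine ⟨𝒞, fun y hy => mem_iUnion₂.2 ⟨_, ?_, mem_cube_floor y⟩, fun z hz => ?_⟩
  · exact (Finite.mem_toFinset _).2 ⟨y, mem_cube_floor y, hy⟩
  obtain ⟨c, hc, hzc⟩ := mem_iUnion₂.1 hz
  obtain ⟨y, hyc, hyY⟩ := (Finite.mem_toFinset _).1 hc
  rw [cube_eq_Icc] at hzc hyc
  refine ⟨y, hyY, (Real.dist_le_of_mem_pi_Icc hzc hyc).trans ?_⟩
  exact (dist_pi_le_iff zero_le_one).2 fun k => by simp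

theorem exists_homeomorph_mapsTo_polyhedron {V : Type*} [TopologicalSpace V]
    (e : V ≃ₜ (Fin N → ℝ)) {X U : Set V} (hX : IsCompact X) (hU : IsOpen U) (hXU : X ⊆ U) :
    ∃ (φ : V ≃ₜ (Fin N → ℝ)) (𝒞 : Finset (Fin N → ℤ)),
      MapsTo φ X (polyhedron 𝒞) ∧ MapsTo φ.symm (polyhedron 𝒞) U := by
  obtain ⟨δ, hδ, hδU⟩ := (hX.image e.continuous).exists_thickening_subset_open
    (e.isOpenMap U hU) (image_mono hXU)
  have hh : 0 < δ / 2 := by positivity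
  obtain ⟨𝒞, hXP, hnear⟩ :=
    exists_polyhedron_near ((hX.image e.continuous).isBounded.smul₀ (δ / 2)⁻¹)
  refine ⟨e.trans (Homeomorph.smulOfNeZero (δ / 2)⁻¹ (by positivity)), 𝒞,
    fun x hx => hXP (smul_mem_smul_set (mem_image_of_mem e hx)), fun z hz => ?_⟩
  obtain ⟨_, ⟨_, ⟨x, hx, rfl⟩, rfl⟩, hzx⟩ := hnear z hz
  have hdist : dist ((δ / 2) • z) (e x) < δ := calc
    dist ((δ / 2) • z) (e x) = δ / 2 * dist z ((δ / 2)⁻¹ • e x) := by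
      conv_lhs => rw [← smul_inv_smul₀ hh.ne' (e x)]
      rw [dist_smul₀, Real.norm_of_nonneg hh.le]
    _ ≤ δ / 2 * 1 := by gcongr
    _ < δ := by linarith
  obtain ⟨u, hu, hue⟩ := hδU (mem_thickening_iff.2 ⟨e x, mem_image_of_mem e hx, hdist⟩)
  simpa [Homeomorph.smulOfNeZero_symm_apply, ← hue] using hu

end UnitGrid

/-- Example 1.2(i) (Borsuk): a compact neighbourhood retract `X ⊆ ℝᴺ` is dominated by a
finite CW complex, with `d ∘ s` equal (not just homotopic) to the identity; in
particular `X` is finitely dominated. -/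
theorem compact_euclidean_neighbourhood_retract_finitelyDominated
    {N : ℕ} (X : Set (EuclideanSpace ℝ (Fin N))) (hX : IsCompact X)
    (U : Set (EuclideanSpace ℝ (Fin N))) (hU : IsOpen U) (hXU : X ⊆ U)
    (r : U → EuclideanSpace ℝ (Fin N)) (hr : Continuous r)
    (hrX : ∀ u : U, r u ∈ X)
    (hret : ∀ u : U, (u : EuclideanSpace ℝ (Fin N)) ∈ X → r u = u) :
    (∃ (K : Type) (_ : TopologicalSpace K) (c : CWStructure K), c.IsFinite ∧
      ∃ (d : C(K, X)) (s : C(X, K)), d.comp s = ContinuousMap.id X) ∧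
    FinitelyDominated X := by
  obtain ⟨φ, 𝒞, hXP, hPU⟩ := UnitGrid.exists_homeomorph_mapsTo_polyhedron
    (EuclideanSpace.equiv (Fin N) ℝ).toHomeomorph hX hU hXU
  let s : C(X, UnitGrid.polyhedron 𝒞) := ⟨hXP.restrict, φ.continuous.restrict hXP⟩
  let d : C(UnitGrid.polyhedron 𝒞, X) :=
    ⟨fun z => ⟨r ⟨φ.symm z, hPU z.2⟩, hrX _⟩, by fun_prop⟩
  have hds : d.comp s = ContinuousMap.id X :=
    ContinuousMap.ext fun x => Subtype.ext <| by simpa [d, s] using hret ⟨x, hXU x.2⟩ x.2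
  exact ⟨⟨_, _, _, UnitGrid.cwStructure_isFinite 𝒞, d, s, hds⟩,
    _, _, _, UnitGrid.cwStructure_isFinite 𝒞, d, s, hds ▸ .refl _⟩
end
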